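/- Let H ≥ 2 be an integer. Let the seller value s be drawn from the distribution on {0,1,…,H−1} with P(s = 0) = 1/H and P(s = y) = 1/((H−y)(H−y+1)) for 1 ≤ y ≤ H−1, and let the buyer value b be drawn independently from the distribution on {1,…,H} with P(b = H) = 1/H and P(b = x) = 1/(x(x+1)) for 1 ≤ x ≤ H−1. Then E[max(b − s, 0)] = 2·H_H/(H+1), where H_H is the H-th harmonic number. -/

import Mathlib

open Finset

noncomputable def Hn (n : ℕ) : ℝ := ∑ k ∈ Finset.Icc 1 n, (1:ℝ)/k

lemma tele (f : ℕ → ℝ) (a : ℕ) : ∀ b, a ≤ b + 1 →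
    ∑ x ∈ Icc a b, (f (x+1) - f x) = f (b+1) - f a := by
  intro b
  induction b with
  | zero => intro h; interval_cases a <;> simp
  | succ n ih =>
      intro h
      rcases Nat.lt_or_ge n.succ a with hlt | hge
      · have : a = n + 2 := by omega
        subst this
        simp [Finset.Icc_eq_empty_of_lt]
      · rw [Finset.sum_Icc_succ_top (by omega), ih (by omega)]
        ring

lemma Hn_succ (n : ℕ) : Hn (n+1) = Hn n + 1/((n:ℝ)+1) := by
  unfold Hn
  rw [Finset.sum_Icc_succ_top (by omega)]
  push_cast; ring

lemma L_frac (a b : ℕ) (ha : 1 ≤ a) (hab : a ≤ b + 1) :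
    ∑ x ∈ Icc a b, 1/((x:ℝ)*((x:ℝ)+1)) = 1/(a:ℝ) - 1/((b:ℝ)+1) := by
  have h := tele (fun x => -1/(x:ℝ)) a b hab
  push_cast at h
  rw [show (1/(a:ℝ) - 1/((b:ℝ)+1)) = -1/((b:ℕ)+1:ℝ) - -1/(a:ℝ) by ring, ← h]
  apply Finset.sum_congr rfl
  intro x hx
  have hx1 : 1 ≤ x := le_trans ha (Finset.mem_Icc.mp hx).1
  have h0 : (x:ℝ) ≠ 0 := by positivity
  have h1 : (x:ℝ) + 1 ≠ 0 := by positivity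
  field_simp
  ring

lemma L_Hn (a b : ℕ) (hab : a ≤ b + 1) :
    ∑ x ∈ Icc a b, 1/((x:ℝ)+1) = Hn (b+1) - Hn a := by
  have h := tele Hn a b hab
  rw [← h]
  apply Finset.sum_congr rfl
  intro x _
  rw [Hn_succ]; ring

lemma Lw (H j : ℕ) (hj : 1 ≤ j) (hjH : j ≤ H) :
    ∑ y ∈ Icc j (H-1), 1/(((H:ℝ)-y)*((H:ℝ)-y+1)) = 1 - 1/((H:ℝ)-j+1) := by
  have hH1 : 1 ≤ H := le_trans hj hjH
  have h := tele (fun y => 1/((H:ℝ)-y+1)) j (H-1) (by omega)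
  rw [show H - 1 + 1 = H by omega] at h
  rw [show (1 - 1/((H:ℝ)-j+1)) = 1/((H:ℝ)-(H:ℕ)+1) - 1/((H:ℝ)-j+1) by norm_num, ← h]
  apply Finset.sum_congr rfl
  intro y hy
  have hy' : y ≤ H - 1 := (Finset.mem_Icc.mp hy).2
  have hyH : (y:ℝ) + 1 ≤ (H:ℝ) := by
    have : y + 1 ≤ H := by omega
    exact_mod_cast this
  have h0 : (H:ℝ) - y ≠ 0 := by nlinarith
  have h1 : (H:ℝ) - y + 1 ≠ 0 := by nlinarith
  push_cast
  rw [show (H:ℝ) - ((y:ℝ)+1) + 1 = (H:ℝ) - y by ring]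
  field_simp
  ring

lemma my_inner_sum (H y : ℕ) (hH : 2 ≤ H) (hy : y < H) :
    ∑ x ∈ Icc 1 H, (if x = H then 1/(H:ℝ) else 1/((x:ℝ)*((x:ℝ)+1))) * max ((x:ℝ) - y) 0
      = Hn H - Hn y := by
  have hsplit : Icc 1 H = Icc 1 y ∪ Icc (y+1) H := by
    ext a; simp only [Finset.mem_union, Finset.mem_Icc]; omega
  rw [hsplit, Finset.sum_union (by
    rw [Finset.disjoint_left]; intro a ha hb
    simp only [Finset.mem_Icc] at ha hb; omega)]
  have h1 : ∑ x ∈ Icc 1 y, (if x = H then 1/(H:ℝ) else 1/((x:ℝ)*((x:ℝ)+1))) * max ((x:ℝ) - y) 0 = 0 := by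
    apply Finset.sum_eq_zero
    intro x hx
    have hxy : x ≤ y := (Finset.mem_Icc.mp hx).2
    have : max ((x:ℝ) - y) 0 = 0 := by
      apply max_eq_right
      have : (x:ℝ) ≤ y := by exact_mod_cast hxy
      linarith
    rw [this, mul_zero]
  rw [h1, zero_add]
  have h2 : ∀ x ∈ Icc (y+1) H, (if x = H then 1/(H:ℝ) else 1/((x:ℝ)*((x:ℝ)+1))) * max ((x:ℝ) - y) 0
      = (if x = H then 1/(H:ℝ) else 1/((x:ℝ)*((x:ℝ)+1))) * ((x:ℝ) - y) := by
    intro x hx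
    have hxy : y + 1 ≤ x := (Finset.mem_Icc.mp hx).1
    congr 1
    apply max_eq_left
    have : (y:ℝ) + 1 ≤ x := by exact_mod_cast hxy
    linarith
  rw [Finset.sum_congr rfl h2]
  rw [show H = (H-1) + 1 by omega, Finset.sum_Icc_succ_top (by omega)]
  rw [show (H-1) + 1 = H by omega]
  rw [if_pos rfl]
  have h3 : ∀ x ∈ Icc (y+1) (H-1), (if x = H then 1/(H:ℝ) else 1/((x:ℝ)*((x:ℝ)+1))) * ((x:ℝ) - y)
      = 1/((x:ℝ)+1) - (y:ℝ) * (1/((x:ℝ)*((x:ℝ)+1))) := by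
    intro x hx
    have hx' := Finset.mem_Icc.mp hx
    have hxH : x ≠ H := by omega
    rw [if_neg hxH]
    have hx1 : (1:ℕ) ≤ x := by omega
    have h0 : (x:ℝ) ≠ 0 := by positivity
    have hp1 : (x:ℝ) + 1 ≠ 0 := by positivity
    field_simp
  rw [Finset.sum_congr rfl h3, Finset.sum_sub_distrib, ← Finset.mul_sum]
  rw [L_Hn (y+1) (H-1) (by omega), L_frac (y+1) (H-1) (by omega) (by omega)]
  rw [show (H-1) + 1 = H by omega]
  have hc : ((H-1:ℕ):ℝ) = (H:ℝ) - 1 := by push_cast [show 1 ≤ H by omega]; ring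
  rw [hc, Hn_succ y]
  have hHne : (H:ℝ) ≠ 0 := by positivity
  have hy1 : (y:ℝ) + 1 ≠ 0 := by positivity
  push_cast
  field_simp
  have hinv : (H:ℝ) * (H:ℝ)⁻¹ = 1 := mul_inv_cancel₀ hHne
  linear_combination ((y:ℝ) + (y:ℝ)^2) * hinv

lemma swap_sum (H : ℕ) (hH : 2 ≤ H) :
    ∑ y ∈ Icc 1 (H-1), Hn y * (1/(((H:ℝ)-y)*((H:ℝ)-y+1)))
  = ∑ j ∈ Icc 1 (H-1), (1/(j:ℝ)) * (1 - 1/((H:ℝ)-j+1)) := by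
  have step : ∀ y ∈ Icc 1 (H-1), Hn y * (1/(((H:ℝ)-y)*((H:ℝ)-y+1)))
      = ∑ j ∈ Icc 1 (H-1), (if j ≤ y then (1/(j:ℝ)) * (1/(((H:ℝ)-y)*((H:ℝ)-y+1))) else 0) := by
    intro y hy
    have hy' := Finset.mem_Icc.mp hy
    rw [← Finset.sum_filter,
      show Finset.filter (fun j => j ≤ y) (Icc 1 (H-1)) = Icc 1 y by
        ext a; simp only [Finset.mem_filter, Finset.mem_Icc]; omega]
    unfold Hn
    rw [Finset.sum_mul]
  rw [Finset.sum_congr rfl step, Finset.sum_comm]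
  apply Finset.sum_congr rfl
  intro j hj
  have hj' := Finset.mem_Icc.mp hj
  rw [← Finset.sum_filter,
    show Finset.filter (fun y => j ≤ y) (Icc 1 (H-1)) = Icc j (H-1) by
      ext a; simp only [Finset.mem_filter, Finset.mem_Icc]; omega,
    ← Finset.mul_sum, Lw H j hj'.1 (by omega)]

lemma Qlem (H : ℕ) (hH : 2 ≤ H) : ∑ j ∈ Icc 1 (H-1), 1/((H:ℝ)+1-(j:ℝ)) = Hn H - 1 := by
  have : ∑ j ∈ Icc 1 (H-1), 1/((H:ℝ)+1-(j:ℝ)) = ∑ k ∈ Icc 2 H, 1/(k:ℝ) := by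
    apply Finset.sum_nbij' (i := fun j => H + 1 - j) (j := fun k => H + 1 - k)
    · intro a ha; simp only [Finset.mem_Icc] at *; omega
    · intro a ha; simp only [Finset.mem_Icc] at *; omega
    · intro a ha; simp only [Finset.mem_Icc] at *; omega
    · intro a ha; simp only [Finset.mem_Icc] at *; omega
    · intro a ha
      have ha' := Finset.mem_Icc.mp ha
      have : ((H + 1 - a : ℕ) : ℝ) = (H:ℝ) + 1 - a := by
        push_cast [show a ≤ H + 1 by omega]; ring
      rw [this]
  rw [this]
  unfold Hn
  rw [show Icc 1 H = insert 1 (Icc 2 H) by ext a; simp only [Finset.mem_insert, Finset.mem_Icc]; omega,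
    Finset.sum_insert (by simp)]
  norm_num

theorem stmt4 (H : ℕ) (hH : 2 ≤ H)
    (Ps Pb : ℕ → ℝ)
    (hPs : ∀ y, Ps y = if y = 0 then 1/(H:ℝ) else 1/(((H:ℝ)-y)*((H:ℝ)-y+1)))
    (hPb : ∀ x, Pb x = if x = H then 1/(H:ℝ) else 1/((x:ℝ)*((x:ℝ)+1))) :
    ∑ y ∈ Finset.Icc 0 (H-1), ∑ x ∈ Finset.Icc 1 H,
        Ps y * Pb x * max ((x:ℝ) - y) 0 = 2 * Hn H / ((H:ℝ)+1) := by
  have hred : ∀ y ∈ Finset.Icc 0 (H-1),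
      ∑ x ∈ Finset.Icc 1 H, Ps y * Pb x * max ((x:ℝ) - y) 0
        = Ps y * (Hn H - Hn y) := by
    intro y hy
    have hy' : y < H := by
      have := (Finset.mem_Icc.mp hy).2; omega
    calc ∑ x ∈ Finset.Icc 1 H, Ps y * Pb x * max ((x:ℝ) - y) 0
        = Ps y * ∑ x ∈ Finset.Icc 1 H, Pb x * max ((x:ℝ) - y) 0 := by
          rw [Finset.mul_sum]; apply Finset.sum_congr rfl; intro x _; ring
      _ = Ps y * (Hn H - Hn y) := by
          congr 1
          rw [← my_inner_sum H y hH hy']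
          apply Finset.sum_congr rfl
          intro x _; rw [hPb]
  rw [Finset.sum_congr rfl hred]
  rw [show Finset.Icc 0 (H-1) = insert 0 (Finset.Icc 1 (H-1)) by
    ext a; simp only [Finset.mem_insert, Finset.mem_Icc]; omega,
    Finset.sum_insert (by simp)]
  have hHn0 : Hn 0 = 0 := by unfold Hn; simp
  rw [hPs 0, if_pos rfl, hHn0]
  have hmain : ∀ y ∈ Finset.Icc 1 (H-1), Ps y * (Hn H - Hn y)
      = Hn H * (1/(((H:ℝ)-y)*((H:ℝ)-y+1))) - Hn y * (1/(((H:ℝ)-y)*((H:ℝ)-y+1))) := by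
    intro y hy
    have hy' := Finset.mem_Icc.mp hy
    rw [hPs y, if_neg (by omega)]
    ring
  rw [Finset.sum_congr rfl hmain, Finset.sum_sub_distrib, ← Finset.mul_sum,
    Lw H 1 le_rfl (by omega), swap_sum H hH]
  have hexp : ∀ j ∈ Finset.Icc 1 (H-1), (1/(j:ℝ)) * (1 - 1/((H:ℝ)-j+1))
      = 1/(j:ℝ) - (1/((H:ℝ)+1)) * (1/(j:ℝ)) - (1/((H:ℝ)+1)) * (1/((H:ℝ)+1-(j:ℝ))) := by
    intro j hj
    have hj' := Finset.mem_Icc.mp hj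
    have h1 : (j:ℝ) ≠ 0 := by
      have : (1:ℝ) ≤ j := by exact_mod_cast hj'.1
      linarith
    have hjH : (j:ℝ) + 1 ≤ H := by
      have : j + 1 ≤ H := by omega
      exact_mod_cast this
    have h2 : (H:ℝ) - j + 1 ≠ 0 := by nlinarith
    have h3 : (H:ℝ) + 1 - j ≠ 0 := by nlinarith
    have h4 : (H:ℝ) + 1 ≠ 0 := by positivity
    rw [show (H:ℝ) - j + 1 = (H:ℝ) + 1 - j by ring]
    field_simp
    ring
  rw [Finset.sum_congr rfl hexp, Finset.sum_sub_distrib, Finset.sum_sub_distrib,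
    ← Finset.mul_sum, ← Finset.mul_sum, Qlem H hH,
    show ∑ j ∈ Finset.Icc 1 (H-1), 1/(j:ℝ) = Hn (H-1) from rfl]
  have hHn1 : Hn H = Hn (H-1) + 1/((H:ℝ)) := by
    have := Hn_succ (H-1)
    rw [show H - 1 + 1 = H by omega] at this
    rw [this]
    congr 1
    push_cast [show 1 ≤ H by omega]
    ring
  have h4 : (H:ℝ) ≠ 0 := by positivity
  have h5 : (H:ℝ) + 1 ≠ 0 := by positivity
  rw [hHn1]
  field_simp
  have hinv : (H:ℝ) * (H:ℝ)⁻¹ = 1 := mul_inv_cancel₀ h4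
  linear_combination (-(1 + (H:ℝ) + (H:ℝ) * Hn (H-1) + (H:ℝ)^2 * Hn (H-1))) * hinv
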